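/- arXiv:math-ph/0003019 — 5 statements merged into one kernel-verified Lean document; each statement's English description precedes it below -/
import Mathlib

section
/- For every ε ∈ (0,1] there exists a constant C_ε > 0 such that for all R ≥ 1, the double integral ∫₀^{π/2} ( ∫₀^{y} e^{−R(sin y − sin x)} dx ) dy is at most C_ε · R^{ε−1}. -/
/-!
By Jordan's inequality, `sin y - sin x = 2 sin ((y - x) / 2) cos ((y + x) / 2)` is at least
`(4 / π²) (y - x) (π / 2 - y)` on `0 ≤ x ≤ y ≤ π / 2`. Combined with `e^{-s} ≤ s^{-t}` for
`t = 1 - ε ∈ [0, 1)`, the integrand is at most `(4R / π²)^{-t} (y - x)^{-t} (π / 2 - y)^{-t}`,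
and both singular factors are integrable because `t < 1`.
-/

open Real MeasureTheory

lemma Real.exp_neg_le_rpow_neg {s t : ℝ} (hs : 0 < s) (ht₀ : 0 ≤ t) (ht₁ : t ≤ 1) :
    exp (-s) ≤ s ^ (-t) := by
  rw [rpow_neg hs.le, exp_neg]
  refine inv_anti₀ (by positivity) ?_
  rcases le_total s 1 with h | h
  · exact (rpow_le_one hs.le h ht₀).trans (one_le_exp hs.le)
  · calc s ^ t ≤ s ^ (1 : ℝ) := rpow_le_rpow_of_exponent_le h ht₁
      _ ≤ exp s := by rw [rpow_one]; linarith [add_one_le_exp s]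

lemma Real.four_div_pi_sq_mul_le_sin_sub_sin {x y : ℝ} (hx : 0 ≤ x) (hxy : x ≤ y)
    (hy : y ≤ π / 2) :
    4 / π ^ 2 * ((y - x) * (π / 2 - y)) ≤ sin y - sin x := by
  have hπ := pi_pos
  have h_sin : (y - x) / π ≤ sin ((y - x) / 2) := by
    convert mul_le_sin (x := (y - x) / 2) (by linarith) (by linarith) using 1
    ring
  have h_cos : 2 / π * (π / 2 - y) ≤ cos ((y + x) / 2) :=
    calc 2 / π * (π / 2 - y) = 1 - 2 / π * y := by field_simp
      _ ≤ cos y := one_sub_mul_le_cos (by linarith) hy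
      _ ≤ cos ((y + x) / 2) := cos_le_cos_of_nonneg_of_le_pi (by linarith) (by linarith)
          (by linarith)
  calc 4 / π ^ 2 * ((y - x) * (π / 2 - y)) = 2 * ((y - x) / π * (2 / π * (π / 2 - y))) := by
        field_simp; ring
    _ ≤ 2 * (sin ((y - x) / 2) * cos ((y + x) / 2)) := by
        gcongr 2 * ?_
        exact mul_le_mul h_sin h_cos (mul_nonneg (by positivity) (by linarith))
          ((div_nonneg (by linarith) hπ.le).trans h_sin)
    _ = sin y - sin x := by rw [sin_sub_sin]; ring

lemma intervalIntegrable_sub_rpow_neg {a b t : ℝ} (ht : t < 1) :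
    IntervalIntegrable (fun x ↦ (b - x) ^ (-t)) volume a b := by
  simpa using ((intervalIntegral.intervalIntegrable_rpow' (a := 0) (b := b - a)
    (by linarith : (-1 : ℝ) < -t)).comp_sub_left b).symm

lemma integral_sub_rpow_neg {a b t : ℝ} (ht : t < 1) :
    ∫ x in a..b, (b - x) ^ (-t) = (b - a) ^ (1 - t) / (1 - t) := by
  rw [intervalIntegral.integral_comp_sub_left (fun x ↦ x ^ (-t)) b,
    integral_rpow (Or.inl (by linarith)), sub_self, zero_rpow (by linarith)]
  ring_nf

lemma exp_neg_mul_sin_sub_sin_le {R t x y : ℝ} (hR : 0 < R) (ht₀ : 0 ≤ t) (ht₁ : t ≤ 1)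
    (hx : 0 ≤ x) (hxy : x < y) (hy : y < π / 2) :
    exp (-R * (sin y - sin x)) ≤ (4 / π ^ 2 * R) ^ (-t) * (π / 2 - y) ^ (-t) * (y - x) ^ (-t) := by
  have hκR : 0 < 4 / π ^ 2 * R := by positivity
  have hyx : 0 < y - x := by linarith
  have hy' : 0 < π / 2 - y := by linarith
  calc exp (-R * (sin y - sin x))
      ≤ exp (-(4 / π ^ 2 * R * ((π / 2 - y) * (y - x)))) := by
        have := mul_le_mul_of_nonneg_left (four_div_pi_sq_mul_le_sin_sub_sin hx hxy.le hy.le) hR.le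
        rw [exp_le_exp]
        linarith
    _ ≤ (4 / π ^ 2 * R * ((π / 2 - y) * (y - x))) ^ (-t) :=
        exp_neg_le_rpow_neg (by positivity) ht₀ ht₁
    _ = (4 / π ^ 2 * R) ^ (-t) * (π / 2 - y) ^ (-t) * (y - x) ^ (-t) := by
        rw [mul_rpow hκR.le (by positivity), mul_rpow hy'.le hyx.le, mul_assoc]

lemma integral_exp_neg_mul_sin_sub_sin_le {R t y : ℝ} (hR : 0 < R) (ht₀ : 0 ≤ t) (ht₁ : t < 1)
    (hy₀ : 0 ≤ y) (hy : y < π / 2) :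
    ∫ x in 0..y, exp (-R * (sin y - sin x))
      ≤ (4 / π ^ 2 * R) ^ (-t) * (π / 2 - y) ^ (-t) * ((π / 2) ^ (1 - t) / (1 - t)) := by
  calc ∫ x in 0..y, exp (-R * (sin y - sin x))
      ≤ ∫ x in 0..y, (4 / π ^ 2 * R) ^ (-t) * (π / 2 - y) ^ (-t) * (y - x) ^ (-t) :=
        intervalIntegral.integral_mono_on_of_le_Ioo hy₀
          ((by fun_prop : Continuous _).intervalIntegrable _ _)
          ((intervalIntegrable_sub_rpow_neg ht₁).const_mul _)
          fun x hx ↦ exp_neg_mul_sin_sub_sin_le hR ht₀ ht₁.le hx.1.le hx.2 hy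
    _ = (4 / π ^ 2 * R) ^ (-t) * (π / 2 - y) ^ (-t) * (y ^ (1 - t) / (1 - t)) := by
        rw [intervalIntegral.integral_const_mul, integral_sub_rpow_neg ht₁, sub_zero]
    _ ≤ (4 / π ^ 2 * R) ^ (-t) * (π / 2 - y) ^ (-t) * ((π / 2) ^ (1 - t) / (1 - t)) := by
        have : 0 < 1 - t := by linarith
        gcongr

/-- For every ε ∈ (0,1] there exists C_ε > 0 such that for all R ≥ 1,
∫₀^{π/2} (∫₀^y e^{−R(sin y − sin x)} dx) dy ≤ C_ε · R^{ε−1}. -/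
theorem stmt_0 :
    ∀ ε : ℝ, ε ∈ Set.Ioc (0 : ℝ) 1 →
      ∃ C : ℝ, 0 < C ∧ ∀ R : ℝ, 1 ≤ R →
        (∫ y in (0:ℝ)..(π / 2), ∫ x in (0:ℝ)..y,
            Real.exp (-R * (Real.sin y - Real.sin x)))
          ≤ C * R ^ (ε - 1) := by
  rintro ε ⟨hε₀, hε₁⟩
  obtain ⟨t, rfl⟩ : ∃ t, ε = 1 - t := ⟨1 - ε, by ring⟩
  have ht₀ : 0 ≤ t := by linarith
  have ht₁ : t < 1 := by linarith
  refine ⟨(4 / π ^ 2) ^ (-t) * ((π / 2) ^ (1 - t) / (1 - t)) ^ 2, by positivity, fun R hR ↦ ?_⟩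
  have hR₀ : 0 < R := by linarith
  calc ∫ y in 0..π / 2, ∫ x in 0..y, exp (-R * (sin y - sin x))
      ≤ ∫ y in 0..π / 2,
          (4 / π ^ 2 * R) ^ (-t) * ((π / 2) ^ (1 - t) / (1 - t)) * (π / 2 - y) ^ (-t) := by
        refine intervalIntegral.integral_mono_on_of_le_Ioo (by positivity)
          ((by fun_prop : Continuous _).intervalIntegrable _ _)
          ((intervalIntegrable_sub_rpow_neg ht₁).const_mul _) fun y hy ↦ ?_
        exact (integral_exp_neg_mul_sin_sub_sin_le hR₀ ht₀ ht₁ hy.1.le hy.2).trans_eq (by ring)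
    _ = (4 / π ^ 2) ^ (-t) * ((π / 2) ^ (1 - t) / (1 - t)) ^ 2 * R ^ (1 - t - 1) := by
        rw [intervalIntegral.integral_const_mul, integral_sub_rpow_neg ht₁, sub_zero,
          mul_rpow (by positivity) hR₀.le, sub_sub_cancel_left]
        ring
end

section
/- For every R > 0 and every y with 0 ≤ y < π/2, one has ∫₀^{y} e^{−R(sin y − sin x)} dx ≤ (π/(2R)) · (1 − e^{−(2R/π)(π/2 − y)·y}) / (π/2 − y). -/
open Real MeasureTheory

/-!
Jordan's inequality at `π / 2 - y` gives `cos y ≥ (2 / π) (π / 2 - y)`, and concavity of `sin` on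
`[0, π]` gives `sin y - sin x ≥ cos y (y - x)`. Hence the integrand is dominated by
`exp (-c (y - x))` with `c = (2 R / π) (π / 2 - y)`, whose integral over `[0, y]` is
`(1 - exp (-c y)) / c`, which is the right-hand side.
-/

theorem Real.cos_mul_sub_le_sin_sub_sin {x y : ℝ} (hx : 0 ≤ x) (hxy : x ≤ y) (hy : y ≤ π) :
    cos y * (y - x) ≤ sin y - sin x := by
  rcases hxy.eq_or_lt with rfl | hlt
  · simp
  have hslope := strictConcaveOn_sin_Icc.concaveOn.le_slope_of_hasDerivAt
    ⟨hx, hlt.le.trans hy⟩ ⟨hx.trans hlt.le, hy⟩ hlt (hasDerivAt_sin y)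
  rw [slope_def_field, le_div_iff₀ (sub_pos.2 hlt)] at hslope
  exact hslope

theorem Real.two_div_pi_mul_sub_le_sin_sub_sin {x y : ℝ} (hx : 0 ≤ x) (hxy : x ≤ y)
    (hy : y ≤ π / 2) : 2 / π * (π / 2 - y) * (y - x) ≤ sin y - sin x := by
  have hcos : 2 / π * (π / 2 - y) ≤ cos y := by
    simpa [sin_pi_div_two_sub] using mul_le_sin (sub_nonneg.2 hy) (by linarith)
  calc 2 / π * (π / 2 - y) * (y - x) ≤ cos y * (y - x) :=
        mul_le_mul_of_nonneg_right hcos (sub_nonneg.2 hxy)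
    _ ≤ sin y - sin x := cos_mul_sub_le_sin_sub_sin hx hxy (by linarith [pi_pos])

theorem integral_exp_neg_mul_sub {c : ℝ} (hc : c ≠ 0) (a b : ℝ) :
    ∫ x in a..b, exp (-c * (b - x)) = (1 - exp (-c * (b - a))) / c := by
  have hderiv (x : ℝ) : HasDerivAt (fun t ↦ exp (-c * (b - t)) / c) (exp (-c * (b - x))) x := by
    refine ((((hasDerivAt_id x).const_sub b).const_mul (-c)).exp.div_const c).congr_deriv ?_
    simp only [id]
    field_simp
  rw [intervalIntegral.integral_eq_sub_of_hasDerivAt (fun x _ ↦ hderiv x)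
    ((by fun_prop : Continuous fun x ↦ exp (-c * (b - x))).intervalIntegrable _ _)]
  simp [sub_div]

/-- For R > 0 and 0 ≤ y < π/2,
∫₀^y e^{−R(sin y − sin x)} dx ≤ (π/(2R)) · (1 − e^{−(2R/π)(π/2−y)y})/(π/2 − y). -/
theorem stmt_2 :
    ∀ R : ℝ, 0 < R → ∀ y : ℝ, 0 ≤ y → y < π / 2 →
      (∫ x in (0:ℝ)..y, Real.exp (-R * (Real.sin y - Real.sin x)))
        ≤ (π / (2 * R)) *
            (1 - Real.exp (-(2 * R / π) * (π / 2 - y) * y)) / (π / 2 - y) := by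
  intro R hR y hy0 hy
  have hc : 2 * R / π * (π / 2 - y) ≠ 0 :=
    (mul_pos (by positivity) (by linarith [pi_pos])).ne'
  calc (∫ x in (0:ℝ)..y, exp (-R * (sin y - sin x)))
      ≤ ∫ x in (0:ℝ)..y, exp (-(2 * R / π * (π / 2 - y)) * (y - x)) := by
        refine intervalIntegral.integral_mono_on hy0
          ((by fun_prop : Continuous _).intervalIntegrable _ _)
          ((by fun_prop : Continuous _).intervalIntegrable _ _) fun x hx ↦ ?_
        have := mul_le_mul_of_nonneg_left
          (two_div_pi_mul_sub_le_sin_sub_sin hx.1 hx.2 hy.le) hR.le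
        rw [exp_le_exp]
        linear_combination this
    _ = _ := by
        rw [integral_exp_neg_mul_sub hc]
        field_simp
        ring_nf
end

section
/- For every ν ∈ ℂ there exists a constant C > 0 such that for all real r ≥ 1, |∫₀^{2π} e^{iνθ} e^{2ir·cos θ} dθ| ≤ C · r^{−1/2}. -/
/-!
Off the stationary points `0, π, 2π` of the phase `2r cos θ`, integrating by parts against
`d/dθ (i/(2r)) e^{2ir cos θ} = sin θ · e^{2ir cos θ}` bounds the integral over a piece where
`|sin θ| ≥ sin δ` by `O(1 / (r sin δ))`, using `∫ sin⁻² = [-cot]`. The three `δ`-neighbourhoods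
of the stationary points contribute `O(δ)` trivially, and `δ = r^{-1/2}` balances the two
since `sin δ ≥ 2δ/π`.
-/

open Real MeasureTheory Set
open scoped Complex
open Complex (I)

theorem norm_integral_mul_deriv_le {u u' v v' : ℝ → ℂ} {c d B : ℝ} (hcd : c ≤ d)
    (hu : ∀ x ∈ Icc c d, HasDerivAt u (u' x) x) (hv : ∀ x ∈ Icc c d, HasDerivAt v (v' x) x)
    (hu' : IntervalIntegrable u' volume c d) (hv' : IntervalIntegrable v' volume c d)
    (hB : ∀ x ∈ Icc c d, ‖v x‖ ≤ B) :
    ‖∫ x in c..d, u x * v' x‖ ≤ B * (‖u c‖ + ‖u d‖ + ∫ x in c..d, ‖u' x‖) := by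
  rw [← uIcc_of_le hcd] at hu hv
  rw [intervalIntegral.integral_mul_deriv_eq_deriv_mul hu hv hu' hv']
  have hint : ‖∫ x in c..d, u' x * v x‖ ≤ ∫ x in c..d, B * ‖u' x‖ := by
    refine intervalIntegral.norm_integral_le_of_norm_le hcd (ae_of_all _ fun x hx ↦ ?_)
      (hu'.norm.const_mul B)
    rw [norm_mul, mul_comm]
    exact mul_le_mul_of_nonneg_right (hB x (Ioc_subset_Icc_self hx)) (norm_nonneg _)
  have hc := mul_le_mul_of_nonneg_left (hB c (left_mem_Icc.2 hcd)) (norm_nonneg (u c))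
  have hd := mul_le_mul_of_nonneg_left (hB d (right_mem_Icc.2 hcd)) (norm_nonneg (u d))
  rw [intervalIntegral.integral_const_mul] at hint
  calc ‖u d * v d - u c * v c - ∫ x in c..d, u' x * v x‖
      ≤ ‖u d‖ * ‖v d‖ + ‖u c‖ * ‖v c‖ + ‖∫ x in c..d, u' x * v x‖ := by
        refine (norm_sub_le _ _).trans (add_le_add_left ((norm_sub_le _ _).trans ?_) _)
        simp only [norm_mul, le_refl]
    _ ≤ B * (‖u c‖ + ‖u d‖ + ∫ x in c..d, ‖u' x‖) := by linarith

theorem hasDerivAt_neg_cos_div_sin {θ : ℝ} (hθ : sin θ ≠ 0) :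
    HasDerivAt (fun t ↦ -cos t / sin t) (sin θ ^ 2)⁻¹ θ := by
  refine ((hasDerivAt_cos θ).neg.div (hasDerivAt_sin θ) hθ).congr_deriv ?_
  rw [Pi.neg_apply, inv_eq_one_div, ← sin_sq_add_cos_sq θ]
  ring

theorem intervalIntegrable_inv_sin_sq {c d : ℝ} (h : ∀ θ ∈ uIcc c d, sin θ ≠ 0) :
    IntervalIntegrable (fun θ ↦ (sin θ ^ 2)⁻¹) volume c d :=
  ContinuousOn.intervalIntegrable
    ((continuous_sin.pow 2).continuousOn.inv₀ fun θ hθ ↦ pow_ne_zero 2 (h θ hθ))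

theorem integral_inv_sin_sq_le {c d s : ℝ} (hcd : c ≤ d) (hs : 0 < s)
    (hsin : ∀ θ ∈ Icc c d, s ≤ |sin θ|) :
    ∫ θ in c..d, (sin θ ^ 2)⁻¹ ≤ 2 / s := by
  have hsin0 : ∀ θ ∈ uIcc c d, sin θ ≠ 0 := fun θ hθ ↦
    abs_pos.1 (hs.trans_le (hsin θ (uIcc_of_le hcd ▸ hθ)))
  have hcot : ∀ θ ∈ Icc c d, |cos θ / sin θ| ≤ 1 / s := fun θ hθ ↦ by
    rw [abs_div]
    exact div_le_div₀ zero_le_one (abs_cos_le_one θ) hs (hsin θ hθ)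
  rw [intervalIntegral.integral_eq_sub_of_hasDerivAt
    (fun θ hθ ↦ hasDerivAt_neg_cos_div_sin (hsin0 θ hθ))
    (intervalIntegrable_inv_sin_sq hsin0)]
  have hc := abs_le.1 (hcot c (left_mem_Icc.2 hcd))
  have hd := abs_le.1 (hcot d (right_mem_Icc.2 hcd))
  rw [show 2 / s = 1 / s + 1 / s by ring]
  simp only [neg_div]
  linarith [hc.2, hd.1]

theorem norm_exp_two_I_mul_cos (r θ : ℝ) : ‖cexp (2 * I * r * cos θ)‖ = 1 := by
  rw [Complex.norm_exp]
  simp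

section CosPhase

variable {a a' : ℝ → ℂ} {c d r s A A' : ℝ}

theorem norm_integral_mul_exp_cos_le_length (hcd : c ≤ d) (hA : ∀ θ ∈ Icc c d, ‖a θ‖ ≤ A) :
    ‖∫ θ in c..d, a θ * cexp (2 * I * r * cos θ)‖ ≤ A * (d - c) := by
  have := intervalIntegral.norm_integral_le_of_norm_le_const (a := c) (b := d) (C := A)
    (f := fun θ ↦ a θ * cexp (2 * I * r * cos θ)) fun θ hθ ↦ by
      rw [norm_mul, norm_exp_two_I_mul_cos, mul_one]
      exact hA θ (Ioc_subset_Icc_self (uIoc_of_le hcd ▸ hθ))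
  rwa [abs_of_nonneg (sub_nonneg.2 hcd)] at this

theorem hasDerivAt_mul_inv_sin {θ : ℝ} {a₀ : ℂ} (ha : HasDerivAt a a₀ θ) (hθ : sin θ ≠ 0) :
    HasDerivAt (fun t ↦ a t * ((sin t)⁻¹ : ℝ))
      (a₀ * ((sin θ)⁻¹ : ℝ) + a θ * ((-cos θ / sin θ ^ 2 : ℝ))) θ := by
  have hinv : HasDerivAt (fun t ↦ (sin t)⁻¹) (-cos θ / sin θ ^ 2) θ := (hasDerivAt_sin θ).inv hθ
  exact ha.mul hinv.ofReal_comp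

theorem hasDerivAt_I_div_mul_exp_cos (hr : r ≠ 0) (θ : ℝ) :
    HasDerivAt (fun t : ℝ ↦ I / (2 * r) * cexp (2 * I * r * cos t))
      (sin θ * cexp (2 * I * r * cos θ)) θ := by
  refine ((((hasDerivAt_cos θ).ofReal_comp).const_mul (2 * I * r)).cexp.const_mul
    (I / (2 * r))).congr_deriv ?_
  have hr' : (r : ℂ) ≠ 0 := Complex.ofReal_ne_zero.2 hr
  rw [Complex.ofReal_neg]
  field_simp
  simp [Complex.I_sq]

theorem norm_mul_inv_sin_add_le {x y : ℂ} {θ A A' : ℝ} (hθ : sin θ ≠ 0) (hx : ‖x‖ ≤ A')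
    (hy : ‖y‖ ≤ A) :
    ‖x * ((sin θ)⁻¹ : ℝ) + y * ((-cos θ / sin θ ^ 2 : ℝ))‖ ≤ (A + A') * (sin θ ^ 2)⁻¹ := by
  have hsq : sin θ ^ 2 ≤ |sin θ| := by
    rw [← sq_abs]
    nlinarith [abs_sin_le_one θ, abs_nonneg (sin θ)]
  have hinv : |sin θ|⁻¹ ≤ (sin θ ^ 2)⁻¹ := inv_anti₀ (by positivity) hsq
  have hA : 0 ≤ A := (norm_nonneg _).trans hy
  have hA' : 0 ≤ A' := (norm_nonneg _).trans hx
  calc ‖x * ((sin θ)⁻¹ : ℝ) + y * ((-cos θ / sin θ ^ 2 : ℝ))‖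
      ≤ ‖x‖ * |sin θ|⁻¹ + ‖y‖ * (|cos θ| / sin θ ^ 2) := by
        refine (norm_add_le _ _).trans_eq ?_
        simp only [norm_mul, Complex.norm_real, Real.norm_eq_abs, abs_inv, abs_div, abs_neg,
          abs_pow, sq_abs]
    _ ≤ A' * (sin θ ^ 2)⁻¹ + A * (1 / sin θ ^ 2) := by
        gcongr
        exact abs_cos_le_one θ
    _ = (A + A') * (sin θ ^ 2)⁻¹ := by ring

theorem intervalIntegrable_deriv_mul_inv_sin (hcd : c ≤ d)
    (ha : ∀ θ ∈ Icc c d, HasDerivAt a (a' θ) θ) (ha' : ContinuousOn a' (Icc c d))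
    (hsin0 : ∀ θ ∈ Icc c d, sin θ ≠ 0) :
    IntervalIntegrable (fun θ ↦ a' θ * ((sin θ)⁻¹ : ℝ) + a θ * ((-cos θ / sin θ ^ 2 : ℝ)))
      volume c d := by
  have hcont_a : ContinuousOn a (Icc c d) := fun θ hθ ↦ (ha θ hθ).continuousAt.continuousWithinAt
  refine ContinuousOn.intervalIntegrable (uIcc_of_le hcd ▸ ?_)
  refine (ha'.mul ?_).add (hcont_a.mul ?_) <;>
    refine Complex.continuous_ofReal.comp_continuousOn ?_
  · exact continuous_sin.continuousOn.inv₀ hsin0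
  · exact continuous_cos.neg.continuousOn.div (continuous_sin.pow 2).continuousOn
      fun θ hθ ↦ pow_ne_zero 2 (hsin0 θ hθ)

theorem integral_norm_deriv_mul_inv_sin_le (hcd : c ≤ d) (hs : 0 < s)
    (ha : ∀ θ ∈ Icc c d, HasDerivAt a (a' θ) θ) (ha' : ContinuousOn a' (Icc c d))
    (hA : ∀ θ ∈ Icc c d, ‖a θ‖ ≤ A) (hA' : ∀ θ ∈ Icc c d, ‖a' θ‖ ≤ A')
    (hsin : ∀ θ ∈ Icc c d, s ≤ |sin θ|) :
    ∫ θ in c..d, ‖a' θ * ((sin θ)⁻¹ : ℝ) + a θ * ((-cos θ / sin θ ^ 2 : ℝ))‖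
      ≤ (A + A') * (2 / s) := by
  have hsin0 : ∀ θ ∈ Icc c d, sin θ ≠ 0 := fun θ hθ ↦ abs_pos.1 (hs.trans_le (hsin θ hθ))
  have hA0 := (norm_nonneg _).trans (hA c (left_mem_Icc.2 hcd))
  have hA'0 := (norm_nonneg _).trans (hA' c (left_mem_Icc.2 hcd))
  calc _ ≤ ∫ θ in c..d, (A + A') * (sin θ ^ 2)⁻¹ :=
        intervalIntegral.integral_mono_on hcd
          (intervalIntegrable_deriv_mul_inv_sin hcd ha ha' hsin0).norm
          ((intervalIntegrable_inv_sin_sq (uIcc_of_le hcd ▸ hsin0)).const_mul _)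
          fun θ hθ ↦ norm_mul_inv_sin_add_le (hsin0 θ hθ) (hA' θ hθ) (hA θ hθ)
    _ = (A + A') * ∫ θ in c..d, (sin θ ^ 2)⁻¹ := intervalIntegral.integral_const_mul _ _
    _ ≤ (A + A') * (2 / s) := by grw [integral_inv_sin_sq_le hcd hs hsin]

theorem norm_integral_mul_exp_cos_le (hcd : c ≤ d) (hr : 0 < r) (hs : 0 < s)
    (ha : ∀ θ ∈ Icc c d, HasDerivAt a (a' θ) θ) (ha' : ContinuousOn a' (Icc c d))
    (hA : ∀ θ ∈ Icc c d, ‖a θ‖ ≤ A) (hA' : ∀ θ ∈ Icc c d, ‖a' θ‖ ≤ A')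
    (hsin : ∀ θ ∈ Icc c d, s ≤ |sin θ|) :
    ‖∫ θ in c..d, a θ * cexp (2 * I * r * cos θ)‖ ≤ (2 * A + A') / (r * s) := by
  have hsin0 : ∀ θ ∈ Icc c d, sin θ ≠ 0 := fun θ hθ ↦ abs_pos.1 (hs.trans_le (hsin θ hθ))
  -- integrate `a / sin` against the derivative of `v = i / (2r) * exp (2 i r cos θ)`
  let u : ℝ → ℂ := fun θ ↦ a θ * ((sin θ)⁻¹ : ℝ)
  have hint : ∫ θ in c..d, a θ * cexp (2 * I * r * cos θ)
      = ∫ θ in c..d, u θ * (sin θ * cexp (2 * I * r * cos θ)) := by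
    refine intervalIntegral.integral_congr fun θ hθ ↦ ?_
    have h0 : (sin θ : ℂ) ≠ 0 := Complex.ofReal_ne_zero.2 (hsin0 θ (uIcc_of_le hcd ▸ hθ))
    simp only [u, Complex.ofReal_inv]
    field_simp
  have hu_le : ∀ θ ∈ Icc c d, ‖u θ‖ ≤ A / s := fun θ hθ ↦ by
    simp only [u, norm_mul, Complex.norm_real, norm_inv, Real.norm_eq_abs]
    exact mul_le_mul (hA θ hθ) (inv_anti₀ hs (hsin θ hθ)) (by positivity)
      ((norm_nonneg _).trans (hA θ hθ))
  rw [hint]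
  calc _ ≤ 1 / (2 * r) * (‖u c‖ + ‖u d‖ + ∫ θ in c..d,
          ‖a' θ * ((sin θ)⁻¹ : ℝ) + a θ * ((-cos θ / sin θ ^ 2 : ℝ))‖) :=
        norm_integral_mul_deriv_le hcd
          (fun θ hθ ↦ hasDerivAt_mul_inv_sin (ha θ hθ) (hsin0 θ hθ))
          (fun θ _ ↦ hasDerivAt_I_div_mul_exp_cos hr.ne' θ)
          (intervalIntegrable_deriv_mul_inv_sin hcd ha ha' hsin0)
          (Continuous.intervalIntegrable (by fun_prop) c d)
          fun θ _ ↦ by rw [norm_mul, norm_exp_two_I_mul_cos, mul_one]; simp [abs_of_pos hr]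
    _ ≤ 1 / (2 * r) * (A / s + A / s + (A + A') * (2 / s)) := by
        gcongr
        exacts [hu_le c (left_mem_Icc.2 hcd), hu_le d (right_mem_Icc.2 hcd),
          integral_norm_deriv_mul_inv_sin_le hcd hs ha ha' hA hA' hsin]
    _ = (2 * A + A') / (r * s) := by
        field_simp
        ring

end CosPhase

theorem norm_integral_le_add_adjacent {E : Type*} [NormedAddCommGroup E] [NormedSpace ℝ E]
    {f : ℝ → E} (hf : Continuous f) (a b c : ℝ) :
    ‖∫ x in a..c, f x‖ ≤ ‖∫ x in a..b, f x‖ + ‖∫ x in b..c, f x‖ := by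
  rw [← intervalIntegral.integral_add_adjacent_intervals (hf.intervalIntegrable a b)
    (hf.intervalIntegrable b c)]
  exact norm_add_le _ _

theorem sin_le_sin_of_mem_Icc {δ θ : ℝ} (hδ : 0 ≤ δ) (hθ : θ ∈ Icc δ (π - δ)) : sin δ ≤ sin θ := by
  rcases le_or_gt θ (π / 2) with h | h
  · exact sin_le_sin_of_le_of_le_pi_div_two (by linarith [pi_pos, hθ.1, hθ.2]) h hθ.1
  · rw [← sin_pi_sub θ]
    exact sin_le_sin_of_le_of_le_pi_div_two (by linarith [pi_pos, hθ.1, hθ.2]) (by linarith)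
      (by linarith [hθ.2])

theorem sin_le_abs_sin_of_mem_Icc_pi_add {δ θ : ℝ} (hδ : 0 ≤ δ) (hθ : θ ∈ Icc (π + δ) (2 * π - δ)) :
    sin δ ≤ |sin θ| := by
  have h := sin_le_sin_of_mem_Icc (θ := θ - π) hδ ⟨by linarith [hθ.1], by linarith [hθ.2]⟩
  rw [sin_sub_pi] at h
  exact h.trans (neg_le_abs _)

theorem one_div_mul_sin_le {r δ : ℝ} (hδ : 0 < δ) (hδπ : δ ≤ π / 2) (hrδ : r * δ ^ 2 = 1) :
    1 / (r * sin δ) ≤ π / 2 * δ := by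
  have hjordan : 2 / π * δ ≤ sin δ := mul_le_sin hδ.le hδπ
  have hr : 0 < r := pos_of_mul_pos_left (hrδ ▸ one_pos) (sq_nonneg δ)
  rw [div_le_iff₀ (mul_pos hr (hjordan.trans_lt' (by positivity)))]
  calc 1 = π / 2 * δ * (r * (2 / π * δ)) := by field_simp; linarith
    _ ≤ π / 2 * δ * (r * sin δ) := by gcongr

section ExpAmplitude

variable {ν : ℂ} {r c d : ℝ}

theorem norm_exp_I_mul_le {θ : ℝ} (hθ : θ ∈ Icc 0 (2 * π)) :
    ‖cexp (I * ν * θ)‖ ≤ exp (2 * π * ‖ν‖) := by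
  rw [Complex.norm_exp, exp_le_exp]
  have h : (I * ν * θ).re = -ν.im * θ := by simp [Complex.mul_re]
  rw [h]
  nlinarith [neg_abs_le ν.im, Complex.abs_im_le_norm ν, hθ.1, hθ.2, abs_nonneg ν.im]

theorem norm_integral_exp_I_mul_exp_cos_le_length (hcd : c ≤ d) (hc : 0 ≤ c) (hd : d ≤ 2 * π) :
    ‖∫ θ in c..d, cexp (I * ν * θ) * cexp (2 * I * r * cos θ)‖ ≤ exp (2 * π * ‖ν‖) * (d - c) :=
  norm_integral_mul_exp_cos_le_length hcd fun _ hθ ↦ norm_exp_I_mul_le (Icc_subset_Icc hc hd hθ)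

theorem norm_integral_exp_I_mul_exp_cos_le {s : ℝ} (hcd : c ≤ d) (hc : 0 ≤ c) (hd : d ≤ 2 * π)
    (hr : 0 < r) (hs : 0 < s) (hsin : ∀ θ ∈ Icc c d, s ≤ |sin θ|) :
    ‖∫ θ in c..d, cexp (I * ν * θ) * cexp (2 * I * r * cos θ)‖
      ≤ exp (2 * π * ‖ν‖) * (‖ν‖ + 2) / (r * s) := by
  have hA : ∀ θ ∈ Icc c d, ‖cexp (I * ν * θ)‖ ≤ exp (2 * π * ‖ν‖) :=
    fun _ hθ ↦ norm_exp_I_mul_le (Icc_subset_Icc hc hd hθ)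
  have hA' : ∀ θ ∈ Icc c d, ‖I * ν * cexp (I * ν * θ)‖ ≤ ‖ν‖ * exp (2 * π * ‖ν‖) :=
    fun θ hθ ↦ by
      rw [norm_mul, norm_mul, Complex.norm_I, one_mul]
      exact mul_le_mul_of_nonneg_left (hA θ hθ) (norm_nonneg _)
  have hderiv : ∀ θ : ℝ, HasDerivAt (fun t : ℝ ↦ cexp (I * ν * t)) (I * ν * cexp (I * ν * θ)) θ :=
    fun θ ↦ by simpa [mul_comm] using ((hasDerivAt_id θ).ofReal_comp.const_mul (I * ν)).cexp
  refine (norm_integral_mul_exp_cos_le hcd hr hs (fun θ _ ↦ hderiv θ) (by fun_prop) hA hA'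
    hsin).trans_eq ?_
  ring

end ExpAmplitude

theorem norm_integral_exp_I_mul_exp_cos_le_of_split {ν : ℂ} {r δ : ℝ} (hr : 0 < r) (hδ : 0 < δ)
    (hδ1 : δ ≤ 1) :
    ‖∫ θ in (0 : ℝ)..2 * π, cexp (I * ν * θ) * cexp (2 * I * r * cos θ)‖
      ≤ exp (2 * π * ‖ν‖) * (4 * δ + 2 * (‖ν‖ + 2) / (r * sin δ)) := by
  have hπ := pi_gt_three
  have hsinδ : 0 < sin δ := sin_pos_of_pos_of_lt_pi hδ (by linarith)
  have hcont : Continuous fun θ : ℝ ↦ cexp (I * ν * θ) * cexp (2 * I * r * cos θ) := by fun_prop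
  have S1 := norm_integral_le_add_adjacent hcont 0 δ (2 * π)
  have S2 := norm_integral_le_add_adjacent hcont δ (π - δ) (2 * π)
  have S3 := norm_integral_le_add_adjacent hcont (π - δ) (π + δ) (2 * π)
  have S4 := norm_integral_le_add_adjacent hcont (π + δ) (2 * π - δ) (2 * π)
  have B1 := norm_integral_exp_I_mul_exp_cos_le_length (ν := ν) (r := r) hδ.le le_rfl
    (by linarith)
  have B2 := norm_integral_exp_I_mul_exp_cos_le (ν := ν) (c := δ) (d := π - δ) (by linarith)
    hδ.le (by linarith) hr hsinδ fun θ hθ ↦ (sin_le_sin_of_mem_Icc hδ.le hθ).trans (le_abs_self _)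
  have B3 := norm_integral_exp_I_mul_exp_cos_le_length (ν := ν) (r := r) (c := π - δ)
    (d := π + δ) (by linarith) (by linarith) (by linarith)
  have B4 := norm_integral_exp_I_mul_exp_cos_le (ν := ν) (c := π + δ) (d := 2 * π - δ)
    (by linarith) (by linarith) (by linarith) hr hsinδ
    fun θ hθ ↦ sin_le_abs_sin_of_mem_Icc_pi_add hδ.le hθ
  have B5 := norm_integral_exp_I_mul_exp_cos_le_length (ν := ν) (r := r) (c := 2 * π - δ)
    (d := 2 * π) (by linarith) (by linarith) le_rfl
  have : exp (2 * π * ‖ν‖) * (4 * δ + 2 * (‖ν‖ + 2) / (r * sin δ))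
      = exp (2 * π * ‖ν‖) * (δ - 0) + exp (2 * π * ‖ν‖) * (‖ν‖ + 2) / (r * sin δ)
        + exp (2 * π * ‖ν‖) * (π + δ - (π - δ)) + exp (2 * π * ‖ν‖) * (‖ν‖ + 2) / (r * sin δ)
        + exp (2 * π * ‖ν‖) * (2 * π - (2 * π - δ)) := by ring
  linarith

/-- For every ν ∈ ℂ there exists C > 0 such that for all r ≥ 1,
|∫₀^{2π} e^{iνθ} e^{2ir cos θ} dθ| ≤ C · r^{−1/2}. -/
theorem stmt_3 :
    ∀ ν : ℂ, ∃ C : ℝ, 0 < C ∧ ∀ r : ℝ, 1 ≤ r →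
      ‖(∫ θ in (0:ℝ)..(2 * π),
          Complex.exp (Complex.I * ν * (θ : ℂ)) *
            Complex.exp (2 * Complex.I * (r : ℂ) * (Real.cos θ : ℂ)))‖
        ≤ C * r ^ (-(1 / 2) : ℝ) := by
  intro ν
  refine ⟨exp (2 * π * ‖ν‖) * (4 + π * (‖ν‖ + 2)), by positivity, fun r hr ↦ ?_⟩
  have hr0 : 0 < r := one_pos.trans_le hr
  set δ := r ^ (-(1 / 2) : ℝ)
  have hδ : 0 < δ := rpow_pos_of_pos hr0 _
  have hδ1 : δ ≤ 1 := rpow_le_one_of_one_le_of_nonpos hr (by norm_num)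
  have hrδ : r * δ ^ 2 = 1 := by
    rw [← rpow_natCast, ← rpow_mul hr0.le]
    norm_num [rpow_neg_one, hr0.ne']
  have hkey := one_div_mul_sin_le hδ (by linarith [pi_gt_three]) hrδ
  calc _ ≤ exp (2 * π * ‖ν‖) * (4 * δ + 2 * (‖ν‖ + 2) / (r * sin δ)) :=
        norm_integral_exp_I_mul_exp_cos_le_of_split hr0 hδ hδ1
    _ = exp (2 * π * ‖ν‖) * (4 * δ + 2 * (‖ν‖ + 2) * (1 / (r * sin δ))) := by ring
    _ ≤ exp (2 * π * ‖ν‖) * (4 * δ + 2 * (‖ν‖ + 2) * (π / 2 * δ)) := by gcongr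
    _ = exp (2 * π * ‖ν‖) * (4 + π * (‖ν‖ + 2)) * δ := by ring
end

section
/- Let p ≥ 1 and let u₀, u₁, …, u_p, z₁, …, z_p be complex numbers that are all nonzero and pairwise distinct. For n, k ∈ {1, …, p} define B_{n,k} = ∏_{i=1}^{p} (u_i/z_i) + ∑_{j=1}^{p} [ u_n·u_k·(u₀ − z_j)·(z_j − u_j) / ( z_j·u₀·(z_j − u_n)·(z_j − u_k) ) ] · ∏_{i=1, i≠j}^{p} (u_i − z_j)/(z_i − z_j). Then B_{n,k} = 0 whenever n ≠ k, and B_{n,n} = u_n · ∏_{i=0, i≠n}^{p} (u_n − u_i) / ( u₀ · ∏_{i=1}^{p} (u_n − z_i) ). -/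
/-!
Write `P(t) = u_n u_k (t - u₀) ∏_{i ≠ k} (t - u_i)`, a polynomial of degree `p`. Up to the factor
`-1/u₀`, the `j`-th summand of `B_{n,k}` is the residue at `z_j`, and `∏ u_i / z_i` the residue
at `0`, of `P(t) / (t (t - u_n) ∏ (t - z_i))`. The denominator has degree `p + 2`, so the residues
add up to zero: by Lagrange interpolation on these `p + 2` nodes, their sum is the coefficient
of `t^{p+1}` in `P`. Hence `B_{n,k}` is the residue at `u_n` divided by `u₀`, which gives the
closed form `B_{n,k} = u_k ∏_{i ∈ {0,…,p}, i ≠ k} (u_n - u_i) / (u₀ ∏ (u_n - z_i))`; it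
vanishes for `n ≠ k` because of the factor `i = n`.
-/

open Finset

/-- The quantity B_{n,k} of Lemma 4 (indices n,k ∈ {1,…,p} encoded by `Fin p`,
with `u : Fin (p+1) → ℂ` the points u₀,…,u_p and `z : Fin p → ℂ` the points
z₁,…,z_p). -/
noncomputable def Bnk (p : ℕ) (u : Fin (p + 1) → ℂ) (z : Fin p → ℂ)
    (n k : Fin p) : ℂ :=
  (∏ i : Fin p, u i.succ / z i) +
    ∑ j : Fin p,
      (u n.succ * u k.succ * (u 0 - z j) * (z j - u j.succ) /
          (z j * u 0 * (z j - u n.succ) * (z j - u k.succ))) *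
        ∏ i ∈ univ.erase j, (u i.succ - z j) / (z i - z j)

open Polynomial

namespace Lagrange

variable {F ι : Type*} [Field F] [DecidableEq ι] {s : Finset ι} {v : ι → F}

theorem sum_eval_div_prod_sub_eq_zero (hvs : Set.InjOn v s) {P : F[X]}
    (hP : P.degree < ↑(#s - 1)) :
    ∑ i ∈ s, P.eval (v i) / ∏ j ∈ s.erase i, (v i - v j) = 0 := by
  rw [← coeff_eq_sum hvs (hP.trans_le (by exact_mod_cast Nat.sub_le _ _)),
    coeff_eq_zero_of_degree_lt hP]

end Lagrange

theorem sum_div_prod_sub_add_add_eq_zero {F : Type*} [Field F] {p : ℕ} {z : Fin p → F}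
    (hz : Function.Injective z) {a b : F} (hab : a ≠ b) (ha : ∀ j, z j ≠ a) (hb : ∀ j, z j ≠ b)
    {P : F[X]} (hP : P.degree ≤ p) :
    ∑ j, P.eval (z j) / ((z j - a) * (z j - b) * ∏ i ∈ univ.erase j, (z j - z i)) +
      P.eval a / ((a - b) * ∏ i, (a - z i)) + P.eval b / ((b - a) * ∏ i, (b - z i)) = 0 := by
  classical
  set T := univ.map ⟨z, hz⟩
  have haT : a ∉ T := by simpa [T] using ha
  have hbT : b ∉ T := by simpa [T] using hb
  have habT : a ∉ insert b T := by simp [hab, haT]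
  have hcard : #(insert a (insert b T)) - 1 = p + 1 := by
    rw [card_insert_of_notMem habT, card_insert_of_notMem hbT, card_map, card_fin]; rfl
  have hprodT : ∀ t, ∏ x ∈ T, (t - x) = ∏ i, (t - z i) := fun t => prod_map _ _ _
  have hprod : ∀ j, ∏ x ∈ (insert a (insert b T)).erase (z j), (z j - x) =
      (z j - a) * (z j - b) * ∏ i ∈ univ.erase j, (z j - z i) := by
    intro j
    have hTj : T.erase (z j) = (univ.erase j).map ⟨z, hz⟩ := (map_erase _ _ _).symm
    rw [erase_insert_of_ne (ha j).symm, erase_insert_of_ne (hb j).symm, hTj,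
      prod_insert (by simp [hab, ha]), prod_insert (by simp [hb]), prod_map, mul_assoc]
    rfl
  have key := Lagrange.sum_eval_div_prod_sub_eq_zero (v := id) (Set.injOn_id _)
    (hP.trans_lt (by rw [hcard]; exact_mod_cast p.lt_succ_self))
  rw [sum_insert habT, sum_insert hbT, sum_map] at key
  simp only [Function.Embedding.coeFn_mk, id, erase_insert habT, erase_insert_of_ne hab,
    erase_insert hbT, hprod, prod_insert hbT, prod_insert haT, hprodT] at key
  linear_combination key

theorem prod_sub_erase_succ_eq_div {F : Type*} [Field F] {p : ℕ} {u : Fin (p + 1) → F} {t : F}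
    {k : Fin p} (ht : t ≠ u k.succ) :
    ∏ i ∈ univ.erase k.succ, (t - u i) =
      (t - u 0) * (∏ i : Fin p, (t - u i.succ)) / (t - u k.succ) := by
  rw [eq_div_iff (sub_ne_zero.2 ht), mul_comm, mul_prod_erase _ (fun i => t - u i) (mem_univ _),
    Fin.prod_univ_succ]

theorem prod_sub_div_sub_eq {F ι : Type*} [Field F] (s : Finset ι) (f g : ι → F) (x : F) :
    ∏ i ∈ s, (f i - x) / (g i - x) = (∏ i ∈ s, (x - f i)) / ∏ i ∈ s, (x - g i) := by
  rw [← prod_div_distrib]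
  exact prod_congr rfl fun i _ => by rw [← neg_sub x, ← neg_sub x (g i), neg_div_neg_eq]

theorem Bnk_eq {p : ℕ} {u : Fin (p + 1) → ℂ} {z : Fin p → ℂ} (hu : ∀ i, u i ≠ 0)
    (hz : ∀ j, z j ≠ 0) (hzinj : Function.Injective z) (huz : ∀ i j, u i ≠ z j) (n k : Fin p) :
    Bnk p u z n k =
      u k.succ * (∏ i ∈ univ.erase k.succ, (u n.succ - u i)) /
        (u 0 * ∏ i : Fin p, (u n.succ - z i)) := by
  set c := u n.succ
  have hc : c ≠ 0 := hu _
  have hu0 : u 0 ≠ 0 := hu 0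
  set P : ℂ[X] := C (c * u k.succ) * Lagrange.nodal (univ.erase k.succ) u
  have hP : P.degree ≤ p := by
    rw [degree_C_mul (mul_ne_zero hc (hu _)), Lagrange.degree_nodal,
      card_erase_of_mem (mem_univ _), card_fin, Nat.add_sub_cancel]
  have hPeval : ∀ t, P.eval t = c * u k.succ * ∏ i ∈ univ.erase k.succ, (t - u i) := fun t => by
    rw [eval_mul, eval_C, Lagrange.eval_nodal]
  have hzero : u 0 * ∏ i, u i.succ / z i = -(P.eval 0 / ((0 - c) * ∏ i, (0 - z i))) := by
    have hquot : ∏ i, u i.succ / z i = (∏ i : Fin p, (0 - u i.succ)) / ∏ i, (0 - z i) := by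
      simpa only [sub_zero] using prod_sub_div_sub_eq univ (fun i => u i.succ) z 0
    have hk : u k.succ ≠ 0 := hu _
    rw [hPeval, prod_sub_erase_succ_eq_div (hu _).symm, hquot]
    field_simp
    ring
  have hterm : ∀ j, u 0 * ((c * u k.succ * (u 0 - z j) * (z j - u j.succ) /
        (z j * u 0 * (z j - c) * (z j - u k.succ))) *
        ∏ i ∈ univ.erase j, (u i.succ - z j) / (z i - z j)) =
      -(P.eval (z j) / ((z j - 0) * (z j - c) * ∏ i ∈ univ.erase j, (z j - z i))) := by
    intro j
    have hzc : z j - c ≠ 0 := sub_ne_zero.2 (huz _ j).symm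
    have hzk : z j - u k.succ ≠ 0 := sub_ne_zero.2 (huz _ j).symm
    have hzj := hz j
    rw [hPeval, prod_sub_erase_succ_eq_div (huz _ j).symm, prod_sub_div_sub_eq,
      ← mul_prod_erase univ (fun i => z j - u i.succ) (mem_univ j)]
    field_simp
    ring
  have hcval : P.eval c / ((c - 0) * ∏ i, (c - z i)) =
      u 0 * (u k.succ * (∏ i ∈ univ.erase k.succ, (c - u i)) / (u 0 * ∏ i, (c - z i))) := by
    rw [hPeval, sub_zero]
    field_simp
  have hresidues := sum_div_prod_sub_add_add_eq_zero hzinj hc.symm hz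
    (fun j => (huz _ j).symm) hP
  apply mul_left_cancel₀ hu0
  rw [Bnk, mul_add, mul_sum, hzero, sum_congr rfl fun j _ => hterm j, sum_neg_distrib, ← hcval]
  linear_combination -hresidues

theorem stmt_8_general (p : ℕ) (u : Fin (p + 1) → ℂ) (z : Fin p → ℂ)
    (hu0 : ∀ i, u i ≠ 0) (hz0 : ∀ j, z j ≠ 0)
    (hzinj : Function.Injective z)
    (huz : ∀ i j, u i ≠ z j) :
    ∀ n k : Fin p,
      (n ≠ k → Bnk p u z n k = 0) ∧
      Bnk p u z n n =
        u n.succ * (∏ i ∈ univ.erase n.succ, (u n.succ - u i)) /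
          (u 0 * ∏ i : Fin p, (u n.succ - z i)) := by
  intro n k
  refine ⟨fun hnk => ?_, Bnk_eq hu0 hz0 hzinj huz n n⟩
  have hn : n.succ ∈ univ.erase k.succ := mem_erase.2 ⟨(Fin.succ_injective p).ne hnk, mem_univ _⟩
  rw [Bnk_eq hu0 hz0 hzinj huz, prod_eq_zero hn (sub_self _), mul_zero, zero_div]

/-- Partial-fraction / residue identity: for nonzero pairwise distinct
u₀,…,u_p, z₁,…,z_p, B_{n,k} = 0 for n ≠ k, and
B_{n,n} = uₙ · ∏_{i=0,i≠n}^p (uₙ−uᵢ) / (u₀ · ∏_{i=1}^p (uₙ−zᵢ)). -/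
theorem stmt_8 (p : ℕ) (hp : 1 ≤ p) (u : Fin (p + 1) → ℂ) (z : Fin p → ℂ)
    (hu0 : ∀ i, u i ≠ 0) (hz0 : ∀ j, z j ≠ 0)
    (huinj : Function.Injective u) (hzinj : Function.Injective z)
    (huz : ∀ i j, u i ≠ z j) :
    ∀ n k : Fin p,
      (n ≠ k → Bnk p u z n k = 0) ∧
      Bnk p u z n n =
        u n.succ * (∏ i ∈ univ.erase n.succ, (u n.succ - u i)) /
          (u 0 * ∏ i : Fin p, (u n.succ - z i)) :=
  stmt_8_general p u z hu0 hz0 hzinj huz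
end

section
/- Let p ≥ 1, a₀, …, a_p ∈ ℂ and b₁, …, b_p ∈ ℂ, fix j ∈ {1, …, p}, and assume b_j ∉ ℤ, b_k − b_j ∉ ℤ for all k ≠ j, and no b_k is a nonpositive integer. Define u_j(z) = z^{1−b_j} · F(a₀−b_j+1, …, a_p−b_j+1; {b_k−b_j+1}_{k≠j}, 2−b_j; z) on the slit disc D = { z : 0 < |z| < 1, z ∉ (−1, 0] }, where z^{1−b_j} is the principal branch. Then u_j is annihilated on D by the generalized hypergeometric operator with parameters a₀,…,a_p; b₁,…,b_p: ( d/dz ∘ (θ + b₁ − 1) ∘ ⋯ ∘ (θ + b_p − 1) ) u_j(z) = ( (θ + a₀) ∘ ⋯ ∘ (θ + a_p) ) u_j(z) for z ∈ D. -/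
/-!
With `λ = 1 - b j`, the function `u_j` is `z ^ λ * ∑ cₙ zⁿ`, where `cₙ` are the coefficients of the
shifted hypergeometric series; by the ratio test they are summable against `rⁿ` for every `r < 1`.
Differentiating termwise, `θ + d` maps `z ^ λ * ∑ cₙ zⁿ` to `z ^ λ * ∑ (n + λ + d) cₙ zⁿ`, so both
sides of the equation are `z ^ λ` times explicit power series. Writing `d/dz = z⁻¹ θ`, the left
series has vanishing constant term (the factor of index `j` is `n`), and after the index shift
`n ↦ n + 1` it agrees termwise with the right one by the two-term recurrence of the
hypergeometric coefficients.
-/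

open Finset

/-- The generalized hypergeometric series
F(a₀,…,a_p; b₁,…,b_p; z) = ∑ₙ ((a₀)ₙ⋯(a_p)ₙ)/((b₁)ₙ⋯(b_p)ₙ · n!) · zⁿ. -/
noncomputable def hyperF {p : ℕ} (a : Fin (p + 1) → ℂ) (b : Fin p → ℂ) (z : ℂ) : ℂ :=
  ∑' n : ℕ,
    ((∏ i, (ascPochhammer ℂ n).eval (a i)) /
        ((∏ i, (ascPochhammer ℂ n).eval (b i)) * (n.factorial : ℂ))) * z ^ n

/-- The operator f ↦ θf + c·f, where (θf)(z) = z·f′(z). -/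
noncomputable def thetaAdd (c : ℂ) (f : ℂ → ℂ) : ℂ → ℂ :=
  fun z => z * deriv f z + c * f z

/-- The slit disc D = { z : 0 < |z| < 1, z ∉ (−1,0] }. -/
def slitDisc : Set ℂ :=
  {z : ℂ | 0 < ‖z‖ ∧ ‖z‖ < 1 ∧
    ¬(z.im = 0 ∧ -1 < z.re ∧ z.re ≤ 0)}

open Filter Topology Metric Complex

def SummableOnUnitBall (c : ℕ → ℂ) : Prop :=
  ∀ r : ℝ, 0 ≤ r → r < 1 → Summable fun n => ‖c n‖ * r ^ n

noncomputable def tsumPow (c : ℕ → ℂ) (z : ℂ) : ℂ := ∑' n, c n * z ^ n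

namespace SummableOnUnitBall

variable {c : ℕ → ℂ}

theorem summable (hc : SummableOnUnitBall c) {z : ℂ} (hz : ‖z‖ < 1) :
    Summable fun n => c n * z ^ n :=
  .of_norm (by simpa only [norm_mul, norm_pow] using hc ‖z‖ (norm_nonneg z) hz)

theorem of_ratio_tendsto_one {ψ : ℕ → ℂ} (hψ : Tendsto ψ atTop (𝓝 1))
    (hc : ∀ n, c (n + 1) = ψ n * c n) : SummableOnUnitBall c := by
  intro r hr0 hr1
  have hlim : Tendsto (fun n => ‖ψ n‖ * r) atTop (𝓝 r) := by
    simpa using hψ.norm.mul_const r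
  refine summable_of_ratio_norm_eventually_le (r := (1 + r) / 2) (by linarith) ?_
  filter_upwards [hlim.eventually_lt_const (show r < (1 + r) / 2 by linarith)] with n hn
  rw [Real.norm_of_nonneg (by positivity), Real.norm_of_nonneg (by positivity), hc, norm_mul,
    pow_succ]
  calc ‖ψ n‖ * ‖c n‖ * (r ^ n * r) = (‖ψ n‖ * r) * (‖c n‖ * r ^ n) := by ring
    _ ≤ (1 + r) / 2 * (‖c n‖ * r ^ n) := by gcongr

theorem natCast_add_mul (hc : SummableOnUnitBall c) (e : ℂ) :
    SummableOnUnitBall fun n => ((n : ℂ) + e) * c n := by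
  intro r hr0 hr1
  obtain ⟨s, hrs, hs1⟩ := exists_between hr1
  have hs0 : 0 < s := hr0.trans_lt hrs
  have hq0 : 0 ≤ r / s := by positivity
  have hq1 : r / s < 1 := (div_lt_one hs0).2 hrs
  -- the linear weight is absorbed by passing from radius `r` to the larger radius `s`
  have hlim : Tendsto (fun n : ℕ => ((n : ℝ) + ‖e‖) * (r / s) ^ n) atTop (𝓝 0) := by
    simpa [add_mul] using (tendsto_self_mul_const_pow_of_lt_one hq0 hq1).add
      ((tendsto_pow_atTop_nhds_zero_of_lt_one hq0 hq1).const_mul ‖e‖)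
  refine .of_norm_bounded_eventually_nat (hc s hs0.le hs1) ?_
  filter_upwards [hlim.eventually_lt_const zero_lt_one] with n hn
  have hne : ‖(n : ℂ) + e‖ ≤ n + ‖e‖ := by simpa using norm_add_le (n : ℂ) e
  calc ‖‖((n : ℂ) + e) * c n‖ * r ^ n‖ = ‖(n : ℂ) + e‖ * (r / s) ^ n * (‖c n‖ * s ^ n) := by
        rw [Real.norm_of_nonneg (by positivity), norm_mul, div_pow]
        field_simp
    _ ≤ 1 * (‖c n‖ * s ^ n) := by
        gcongr
        exact (mul_le_mul_of_nonneg_right hne (by positivity)).trans hn.le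
    _ = ‖c n‖ * s ^ n := one_mul _

theorem prod_natCast_add_mul (hc : SummableOnUnitBall c) {ι : Type*} (s : Finset ι)
    (e : ι → ℂ) : SummableOnUnitBall fun n => (∏ i ∈ s, ((n : ℂ) + e i)) * c n := by
  classical
  induction s using Finset.induction_on with
  | empty => simpa using hc
  | insert i s hi ih => simpa only [Finset.prod_insert hi, mul_assoc] using ih.natCast_add_mul (e i)

theorem hasDerivAt_tsumPow (hc : SummableOnUnitBall c) {z : ℂ} (hz : ‖z‖ < 1) :
    HasDerivAt (tsumPow c) (∑' n, c n * n * z ^ (n - 1)) z := by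
  obtain ⟨t, hzt, ht1⟩ := exists_between hz
  have ht0 : 0 < t := (norm_nonneg z).trans_lt hzt
  have hu := (hc.natCast_add_mul 0 t ht0.le ht1).div_const t
  refine hasDerivAt_tsum_of_isPreconnected (g := fun n w => c n * w ^ n)
    (g' := fun n w => c n * n * w ^ (n - 1)) hu isOpen_ball (convex_ball 0 t).isPreconnected
    (fun n y _ => ?_) (fun n y hy => ?_) (mem_ball_self ht0) (hc.summable (by simp))
    (mem_ball_zero_iff.mpr hzt)
  · simpa [mul_assoc] using (hasDerivAt_pow n y).const_mul (c n)
  · have hyt : ‖y‖ ≤ t := by simpa using (mem_ball_zero_iff.mp hy).le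
    rcases n with _ | m
    · simp
    · calc ‖c (m + 1) * (m + 1 : ℕ) * y ^ (m + 1 - 1)‖
            = ‖((m + 1 : ℕ) + 0) * c (m + 1)‖ * ‖y‖ ^ m := by
              rw [add_zero, mul_comm (c _), norm_mul, norm_pow, Nat.add_sub_cancel]
          _ ≤ ‖((m + 1 : ℕ) + 0) * c (m + 1)‖ * t ^ m := by gcongr
          _ = ‖((m + 1 : ℕ) + 0) * c (m + 1)‖ * t ^ (m + 1) / t := by
              rw [pow_succ]; field_simp

end SummableOnUnitBall

theorem thetaAdd_congr {f g : ℂ → ℂ} {z : ℂ} (h : f =ᶠ[𝓝 z] g) (d : ℂ) :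
    thetaAdd d f z = thetaAdd d g z := by
  simp only [thetaAdd, h.deriv_eq, h.eq_of_nhds]

section Frobenius

variable {c : ℕ → ℂ} (hc : SummableOnUnitBall c) (s : ℂ)
include hc

theorem thetaAdd_cpow_mul_tsumPow (d : ℂ) {z : ℂ} (hz : z ∈ slitPlane) (hz1 : ‖z‖ < 1) :
    thetaAdd d (fun w => w ^ s * tsumPow c w) z =
      z ^ s * tsumPow (fun n => ((n : ℂ) + (s + d)) * c n) z := by
  have hz0 : z ≠ 0 := slitPlane_ne_zero hz
  have hderiv : HasDerivAt (fun w => w ^ s * tsumPow c w) _ z :=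
    (hasStrictDerivAt_cpow_const (c := s) hz).hasDerivAt.mul (hc.hasDerivAt_tsumPow hz1)
  have hpow : z * z ^ (s - 1) = z ^ s := by
    rw [cpow_sub _ _ hz0, cpow_one, mul_div_cancel₀ _ hz0]
  have htheta : z * ∑' n, c n * n * z ^ (n - 1) = ∑' n : ℕ, ((n : ℂ) + 0) * c n * z ^ n := by
    rw [← tsum_mul_left]
    congr 1 with (_ | m)
    · simp
    · rw [Nat.add_sub_cancel, pow_succ]
      ring
  have hsplit : tsumPow (fun n => ((n : ℂ) + (s + d)) * c n) z =
      ∑' n : ℕ, ((n : ℂ) + 0) * c n * z ^ n + (s + d) * tsumPow c z := by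
    rw [tsumPow, tsumPow, ← tsum_mul_left,
      ← ((hc.natCast_add_mul 0).summable hz1).tsum_add ((hc.summable hz1).mul_left _)]
    congr 1 with n
    ring
  rw [thetaAdd, hderiv.deriv, hsplit, ← htheta]
  linear_combination s * tsumPow c z * hpow

theorem eqOn_foldr_thetaAdd_cpow_mul_tsumPow {m : ℕ} (d : Fin m → ℂ) :
    Set.EqOn
      ((List.ofFn fun i => thetaAdd (d i)).foldr (fun op g => op g) fun w => w ^ s * tsumPow c w)
      (fun w => w ^ s * tsumPow (fun n => (∏ i, ((n : ℂ) + (s + d i))) * c n) w)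
      (ball 0 1 ∩ slitPlane) := by
  induction m with
  | zero => intro z _; simp
  | succ m ih =>
    intro z hz
    have hcd := hc.prod_natCast_add_mul Finset.univ fun i : Fin m => s + d i.succ
    rw [List.ofFn_succ, List.foldr_cons, thetaAdd_congr ((ih fun i => d i.succ).eventuallyEq_of_mem
      ((isOpen_ball.inter isOpen_slitPlane).mem_nhds hz)),
      thetaAdd_cpow_mul_tsumPow hcd s (d 0) hz.2 (mem_ball_zero_iff.mp hz.1)]
    congr 2 with n
    rw [Fin.prod_univ_succ]
    ring

end Frobenius

theorem tsumPow_eq_mul_tsumPow_of_shift {e f : ℕ → ℂ} {z : ℂ}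
    (he : Summable fun n => e n * z ^ n) (h0 : e 0 = 0) (hs : ∀ n, e (n + 1) = f n) :
    tsumPow e z = z * tsumPow f z := by
  rw [tsumPow, he.tsum_eq_zero_add, h0, zero_mul, zero_add, tsumPow, ← tsum_mul_left]
  congr 1 with n
  rw [hs, pow_succ]
  ring

theorem tendsto_add_natCast_div_add_natCast (x y : ℂ) :
    Tendsto (fun n : ℕ => (x + n) / (y + n)) atTop (𝓝 1) := by
  have h : ∀ w : ℂ, Tendsto (fun n : ℕ => w * (n : ℂ)⁻¹ + 1) atTop (𝓝 1) := fun w => by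
    simpa using ((tendsto_inv_atTop_nhds_zero_nat (𝕜 := ℂ)).const_mul w).add_const 1
  have hlim := (h x).div (h y) one_ne_zero
  rw [div_one] at hlim
  refine hlim.congr' ?_
  filter_upwards [eventually_ne_atTop 0] with n hn
  have hn' : (n : ℂ) ≠ 0 := Nat.cast_ne_zero.mpr hn
  rw [Pi.div_apply, ← mul_div_mul_right (x + n) (y + n) (inv_ne_zero hn'), add_mul, add_mul,
    mul_inv_cancel₀ hn']

theorem tendsto_prod_add_natCast_div_prod_add_natCast {ι : Type*} [Fintype ι] (x y : ι → ℂ) :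
    Tendsto (fun n : ℕ => (∏ i, (x i + n)) / ∏ i, (y i + n)) atTop (𝓝 1) := by
  simp_rw [← Finset.prod_div_distrib]
  simpa using tendsto_finsetProd Finset.univ fun i _ =>
    tendsto_add_natCast_div_add_natCast (x i) (y i)

noncomputable def hyperCoeff {p : ℕ} (a : Fin (p + 1) → ℂ) (b : Fin p → ℂ) (n : ℕ) : ℂ :=
  (∏ i, (ascPochhammer ℂ n).eval (a i)) /
    ((∏ i, (ascPochhammer ℂ n).eval (b i)) * (n.factorial : ℂ))

section Hypergeometric

variable {p : ℕ} (a : Fin (p + 1) → ℂ) {b : Fin p → ℂ}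

theorem hyperF_eq_tsumPow (b : Fin p → ℂ) : hyperF a b = tsumPow (hyperCoeff a b) := rfl

theorem hyperCoeff_succ (hb : ∀ k (n : ℕ), b k + n ≠ 0) (n : ℕ) :
    hyperCoeff a b (n + 1) =
      (∏ i, (a i + n)) / ((1 + n) * ∏ k, (b k + n)) * hyperCoeff a b n := by
  have hpoch : ∏ k, (ascPochhammer ℂ n).eval (b k) ≠ 0 :=
    Finset.prod_ne_zero_iff.mpr fun k _ => by
      simpa [ascPochhammer_eval_eq_zero_iff, eq_neg_iff_add_eq_zero, add_comm] using
        fun m _ => hb k m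
  have hb' : ∏ k, (b k + n) ≠ 0 := Finset.prod_ne_zero_iff.mpr fun k _ => hb k n
  have hn : (1 + n : ℂ) ≠ 0 := by norm_cast; omega
  simp only [hyperCoeff, ascPochhammer_succ_eval, Finset.prod_mul_distrib, Nat.factorial_succ,
    Nat.cast_mul, Nat.cast_succ]
  field_simp
  ring

theorem mul_hyperCoeff_succ (hb : ∀ k (n : ℕ), b k + n ≠ 0) (n : ℕ) :
    ((1 + n) * ∏ k, (b k + n)) * hyperCoeff a b (n + 1) = (∏ i, (a i + n)) * hyperCoeff a b n := by
  rw [hyperCoeff_succ a hb, ← mul_assoc, mul_div_cancel₀]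
  exact mul_ne_zero (by norm_cast; omega) (Finset.prod_ne_zero_iff.mpr fun k _ => hb k n)

theorem summableOnUnitBall_hyperCoeff (hb : ∀ k (n : ℕ), b k + n ≠ 0) :
    SummableOnUnitBall (hyperCoeff a b) := by
  refine .of_ratio_tendsto_one ?_ (hyperCoeff_succ a hb)
  have hden : ∀ n : ℕ, (1 + n) * ∏ k, (b k + n) = ∏ i, ((Fin.cons 1 b : Fin (p + 1) → ℂ) i + n) :=
    fun n => by simp [Fin.prod_univ_succ]
  simpa only [hden] using tendsto_prod_add_natCast_div_prod_add_natCast a (Fin.cons 1 b)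

end Hypergeometric

theorem slitDisc_subset_ball_inter_slitPlane : slitDisc ⊆ ball 0 1 ∩ slitPlane := by
  rintro z ⟨-, hz1, hslit⟩
  refine ⟨mem_ball_zero_iff.mpr hz1, mem_slitPlane_iff.mpr ?_⟩
  by_contra! h
  have hre : -1 < z.re := (abs_lt.mp ((abs_re_le_norm z).trans_lt hz1)).1
  exact hslit ⟨h.2, hre, h.1⟩

section ShiftedParameters

variable {p : ℕ} (b : Fin p → ℂ) (j : Fin p)

theorem shiftedLower_add_natCast_ne_zero (hbj : ∀ m : ℤ, b j ≠ (m : ℂ))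
    (hbk : ∀ k, k ≠ j → ∀ m : ℤ, b k - b j ≠ (m : ℂ)) (k : Fin p) (n : ℕ) :
    (if k = j then 2 - b j else b k - b j + 1) + n ≠ 0 := by
  split_ifs with hkj
  · exact fun h => hbj (n + 2) (by push_cast; linear_combination -h)
  · exact fun h => hbk k hkj (-(n + 1)) (by push_cast; linear_combination h)

-- the index `j` contributes the factor `n + 1` on the left and `2 - b j + n` on the right
theorem prod_shiftedLower (n : ℕ) :
    (((n + 1 : ℕ) : ℂ) + (1 - b j + 0)) * ∏ k, (((n + 1 : ℕ) : ℂ) + (1 - b j + (b k - 1))) =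
      (1 + n) * ∏ k, ((if k = j then 2 - b j else b k - b j + 1) + n) := by
  have herase : ∏ k ∈ Finset.univ.erase j, (((n + 1 : ℕ) : ℂ) + (1 - b j + (b k - 1))) =
      ∏ k ∈ Finset.univ.erase j, ((if k = j then 2 - b j else b k - b j + 1) + n) :=
    Finset.prod_congr rfl fun k hk => by
      rw [if_neg (Finset.ne_of_mem_erase hk)]
      push_cast
      ring
  rw [← Finset.mul_prod_erase _ _ (Finset.mem_univ j),
    ← Finset.mul_prod_erase _ _ (Finset.mem_univ j), herase, if_pos rfl]
  push_cast
  ring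

end ShiftedParameters

theorem stmt_10_general (p : ℕ) (a : Fin (p + 1) → ℂ) (b : Fin p → ℂ) (j : Fin p)
    (hbj : ∀ m : ℤ, b j ≠ (m : ℂ))
    (hbk : ∀ k, k ≠ j → ∀ m : ℤ, b k - b j ≠ (m : ℂ)) :
    ∀ z ∈ slitDisc,
      deriv ((List.ofFn fun i : Fin p => thetaAdd (b i - 1)).foldr
          (fun op g => op g)
          (fun w => w ^ (1 - b j) *
            hyperF (fun i => a i - b j + 1)
              (fun k => if k = j then 2 - b j else b k - b j + 1) w)) z
        = ((List.ofFn fun i : Fin (p + 1) => thetaAdd (a i)).foldr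
            (fun op g => op g)
            (fun w => w ^ (1 - b j) *
              hyperF (fun i => a i - b j + 1)
                (fun k => if k = j then 2 - b j else b k - b j + 1) w)) z := by
  intro z hz
  have hzU := slitDisc_subset_ball_inter_slitPlane hz
  have hz1 : ‖z‖ < 1 := mem_ball_zero_iff.mp hzU.1
  have hb := shiftedLower_add_natCast_ne_zero b j hbj hbk
  rw [hyperF_eq_tsumPow]
  set c := hyperCoeff (fun i => a i - b j + 1) fun k => if k = j then 2 - b j else b k - b j + 1
  have hc : SummableOnUnitBall c := summableOnUnitBall_hyperCoeff _ hb
  have hcb := hc.prod_natCast_add_mul Finset.univ fun k => 1 - b j + (b k - 1)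
  have hU := (isOpen_ball.inter isOpen_slitPlane).mem_nhds hzU
  rw [((eqOn_foldr_thetaAdd_cpow_mul_tsumPow hc _ _).eventuallyEq_of_mem hU).deriv_eq,
    eqOn_foldr_thetaAdd_cpow_mul_tsumPow hc _ _ hzU]
  refine mul_left_cancel₀ (slitPlane_ne_zero hzU.2) ?_
  have htheta := thetaAdd_cpow_mul_tsumPow hcb (1 - b j) 0 hzU.2 hz1
  rw [thetaAdd, zero_mul, add_zero] at htheta
  rw [htheta, tsumPow_eq_mul_tsumPow_of_shift ((hcb.natCast_add_mul _).summable hz1)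
    (f := fun n => (∏ i, ((n : ℂ) + (1 - b j + a i))) * c n)]
  · ring
  · simp [Finset.prod_eq_zero (Finset.mem_univ j)]
  · intro n
    rw [← mul_assoc, prod_shiftedLower, mul_hyperCoeff_succ _ hb]
    congr 1
    exact Finset.prod_congr rfl fun i _ => by ring

/-- The solution u_j(z) = z^{1−b_j}·F(a₀−b_j+1,…; {b_k−b_j+1}_{k≠j}, 2−b_j; z)
is annihilated on the slit disc by the hypergeometric operator with parameters
a₀,…,a_p; b₁,…,b_p. -/
theorem stmt_10 (p : ℕ) (a : Fin (p + 1) → ℂ) (b : Fin p → ℂ) (j : Fin p)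
    (hbj : ∀ m : ℤ, b j ≠ (m : ℂ))
    (hbk : ∀ k, k ≠ j → ∀ m : ℤ, b k - b j ≠ (m : ℂ))
    (hb : ∀ k, ∀ m : ℕ, b k ≠ -(m : ℂ)) :
    ∀ z ∈ slitDisc,
      deriv ((List.ofFn fun i : Fin p => thetaAdd (b i - 1)).foldr
          (fun op g => op g)
          (fun w => w ^ (1 - b j) *
            hyperF (fun i => a i - b j + 1)
              (fun k => if k = j then 2 - b j else b k - b j + 1) w)) z
        = ((List.ofFn fun i : Fin (p + 1) => thetaAdd (a i)).foldr
            (fun op g => op g)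
            (fun w => w ^ (1 - b j) *
              hyperF (fun i => a i - b j + 1)
                (fun k => if k = j then 2 - b j else b k - b j + 1) w)) z :=
  stmt_10_general p a b j hbj hbk
end
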